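/- Let x₀ ∈ ℝⁿ, u: ℝⁿ → ℝ Lipschitz near x₀, and ψ: ℝⁿ → ℝ (Fréchet) differentiable at x₀ such that u − ψ attains a local maximum at x₀. Then |∇u|(x₀) = |∇⁻u|(x₀), where |∇u|(x₀) = limsup_{y→x₀} |u(y)−u(x₀)|/|y−x₀| and |∇⁻u|(x₀) = limsup_{y→x₀} max{u(x₀)−u(y),0}/|y−x₀|. -/
import Mathlib


open Filter Topology Set

/-- Sub-slope `|∇⁻u|(x) = limsup_{y→x} max{u(x)−u(y),0}/|y−x|`. -/
noncomputable def subSlope {n : ℕ} (u : EuclideanSpace ℝ (Fin n) → ℝ)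
    (x : EuclideanSpace ℝ (Fin n)) : ℝ :=
  Filter.limsup (fun y => max (u x - u y) 0 / dist x y) (𝓝[≠] x)

/-- Local slope `|∇u|(x) = limsup_{y→x} |u(y)−u(x)|/|y−x|`. -/
noncomputable def localSlope {n : ℕ} (u : EuclideanSpace ℝ (Fin n) → ℝ)
    (x : EuclideanSpace ℝ (Fin n)) : ℝ :=
  Filter.limsup (fun y => |u y - u x| / dist x y) (𝓝[≠] x)

private lemma div_mono_num {a b c : ℝ} (h : a ≤ b) (hc : 0 ≤ c) : a / c ≤ b / c := by
  rw [div_eq_mul_inv, div_eq_mul_inv]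
  exact mul_le_mul_of_nonneg_right h (inv_nonneg.mpr hc)

/-- in `ℝⁿ`, if `u` is Lipschitz near `x₀` and can be touched
from above at `x₀` by a function `ψ` differentiable at `x₀`, then
`|∇u|(x₀) = |∇⁻u|(x₀)`. -/
theorem upper_testability_euclidean {n : ℕ} (x₀ : EuclideanSpace ℝ (Fin n))
    (u ψ : EuclideanSpace ℝ (Fin n) → ℝ)
    (huLip : ∃ ε > (0 : ℝ), ∃ K : NNReal, LipschitzOnWith K u (Metric.ball x₀ ε))
    (hψ : DifferentiableAt ℝ ψ x₀)
    (hmax : IsLocalMax (fun x => u x - ψ x) x₀) :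
    localSlope u x₀ = subSlope u x₀ := by
  obtain ⟨ε, hε, K, hLip⟩ := huLip
  by_cases hbot : (𝓝[≠] x₀) = ⊥
  · unfold localSlope subSlope
    rw [hbot]
    simp [Filter.limsup, Filter.limsSup]
  have hne : (𝓝[≠] x₀).NeBot := ⟨hbot⟩
  set l := 𝓝[≠] x₀ with hl
  set D := fderiv ℝ ψ x₀ with hD
  set L : ℝ := ‖D‖ with hLdef
  have hL0 : 0 ≤ L := norm_nonneg _
  set fabs : EuclideanSpace ℝ (Fin n) → ℝ := fun y => |u y - u x₀| / dist x₀ y with hfabs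
  set fpos : EuclideanSpace ℝ (Fin n) → ℝ := fun y => max (u y - u x₀) 0 / dist x₀ y with hfpos
  set fneg : EuclideanSpace ℝ (Fin n) → ℝ := fun y => max (u x₀ - u y) 0 / dist x₀ y with hfneg
  -- basic eventual facts
  have hball : ∀ᶠ y in l, y ∈ Metric.ball x₀ ε ∧ y ≠ x₀ := by
    filter_upwards [nhdsWithin_le_nhds (Metric.ball_mem_nhds x₀ hε),
      eventually_mem_nhdsWithin] with y h1 h2
    exact ⟨h1, h2⟩
  have hdpos : ∀ y : EuclideanSpace ℝ (Fin n), y ≠ x₀ → 0 < dist x₀ y :=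
    fun y hy => dist_pos.mpr (Ne.symm hy)
  have habsK : ∀ᶠ y in l, fabs y ≤ (K : ℝ) := by
    filter_upwards [hball] with y hy
    obtain ⟨hy1, hy2⟩ := hy
    have h1 : dist (u y) (u x₀) ≤ (K : ℝ) * dist y x₀ :=
      hLip.dist_le_mul y hy1 x₀ (Metric.mem_ball_self hε)
    rw [Real.dist_eq] at h1
    rw [hfabs, div_le_iff₀ (hdpos y hy2)]
    calc |u y - u x₀| ≤ (K : ℝ) * dist y x₀ := h1
      _ = (K : ℝ) * dist x₀ y := by rw [dist_comm]
  have hposabs : ∀ y, fpos y ≤ fabs y := fun y =>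
    div_mono_num (max_le (le_abs_self _) (abs_nonneg _)) dist_nonneg
  have hnegabs : ∀ y, fneg y ≤ fabs y := fun y =>
    div_mono_num (max_le (by rw [abs_sub_comm]; exact le_abs_self _) (abs_nonneg _)) dist_nonneg
  have habs0 : ∀ y, 0 ≤ fabs y := fun y => div_nonneg (abs_nonneg _) dist_nonneg
  have hpos0 : ∀ y, 0 ≤ fpos y := fun y => div_nonneg (le_max_right _ _) dist_nonneg
  have hneg0 : ∀ y, 0 ≤ fneg y := fun y => div_nonneg (le_max_right _ _) dist_nonneg
  -- boundedness
  have hBabs : l.IsBoundedUnder (· ≤ ·) fabs := ⟨(K : ℝ), habsK⟩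
  have hBpos : l.IsBoundedUnder (· ≤ ·) fpos :=
    ⟨(K : ℝ), habsK.mono fun y h => (hposabs y).trans h⟩
  have hBneg : l.IsBoundedUnder (· ≤ ·) fneg :=
    ⟨(K : ℝ), habsK.mono fun y h => (hnegabs y).trans h⟩
  have hCabs : l.IsCoboundedUnder (· ≤ ·) fabs :=
    (Filter.isBoundedUnder_of ⟨0, habs0⟩ : l.IsBoundedUnder (· ≥ ·) fabs).isCoboundedUnder_le
  have hCpos : l.IsCoboundedUnder (· ≤ ·) fpos :=
    (Filter.isBoundedUnder_of ⟨0, hpos0⟩ : l.IsBoundedUnder (· ≥ ·) fpos).isCoboundedUnder_le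
  have hCneg : l.IsCoboundedUnder (· ≤ ·) fneg :=
    (Filter.isBoundedUnder_of ⟨0, hneg0⟩ : l.IsBoundedUnder (· ≥ ·) fneg).isCoboundedUnder_le
  -- pointwise decomposition |a|/d = max (pos) (neg)
  have hdecomp : ∀ y, fabs y = max (fpos y) (fneg y) := by
    intro y
    simp only [hfabs, hfpos, hfneg]
    rcases le_total (u y - u x₀) 0 with h | h
    · rw [max_eq_right h, max_eq_left (by linarith : (0:ℝ) ≤ u x₀ - u y),
        abs_of_nonpos h, neg_sub, zero_div,
        max_eq_right (div_nonneg (by linarith : (0:ℝ) ≤ u x₀ - u y) dist_nonneg)]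
    · rw [max_eq_left h, max_eq_right (by linarith : u x₀ - u y ≤ 0),
        abs_of_nonneg h, zero_div, max_eq_left (div_nonneg h dist_nonneg)]
  -- local slope = max of the two one-sided slopes
  have hsplit : localSlope u x₀ = max (limsup fpos l) (limsup fneg l) := by
    have h1 : localSlope u x₀ = limsup (fun y => max (fpos y) (fneg y)) l := by
      unfold localSlope
      congr 1
      funext y
      exact hdecomp y
    rw [h1, limsup_max hCpos hCneg hBpos hBneg]
  -- upper slope bounded by ‖D‖
  have hup : limsup fpos l ≤ L := by
    by_contra hcon
    push_neg at hcon
    set ε' : ℝ := (limsup fpos l - L) / 2 with hε'def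
    have hε' : 0 < ε' := by rw [hε'def]; linarith
    have hlo := (hψ.hasFDerivAt.isLittleO.bound hε')
    have hmax' : ∀ᶠ y in 𝓝 x₀, u y - ψ y ≤ u x₀ - ψ x₀ := hmax
    have hev : ∀ᶠ y in l, fpos y ≤ L + ε' := by
      filter_upwards [nhdsWithin_le_nhds hlo, nhdsWithin_le_nhds hmax',
        eventually_mem_nhdsWithin] with y h1 h2 h3
      have hy : y ≠ x₀ := h3
      have hd : dist x₀ y = ‖y - x₀‖ := by rw [dist_comm, dist_eq_norm]
      have hDle : D (y - x₀) ≤ L * ‖y - x₀‖ :=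
        (le_abs_self _).trans ((Real.norm_eq_abs _) ▸ (D.le_opNorm (y - x₀)))
      have h1' : ψ y - ψ x₀ - D (y - x₀) ≤ ε' * ‖y - x₀‖ :=
        (le_abs_self _).trans ((Real.norm_eq_abs _) ▸ h1)
      have hupper : u y - u x₀ ≤ (L + ε') * ‖y - x₀‖ := by nlinarith [h2]
      rw [hfpos, div_le_iff₀ (hdpos y hy), hd]
      have : (0:ℝ) ≤ (L + ε') * ‖y - x₀‖ :=
        mul_nonneg (by linarith) (norm_nonneg _)
      exact max_le hupper this
    have := Filter.limsup_le_of_le hCpos hev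
    rw [hε'def] at this
    linarith
  -- lower slope at least ‖D‖
  have hsub0 : 0 ≤ limsup fneg l :=
    Filter.le_limsup_of_frequently_le ((Eventually.of_forall hneg0).frequently) hBneg
  have hdown : L ≤ limsup fneg l := by
    by_contra hcon
    push_neg at hcon
    set ε' : ℝ := (L - limsup fneg l) / 3 with hε'def
    have hε' : 0 < ε' := by rw [hε'def]; linarith
    have hLε : L - ε' < L := by linarith
    rcases lt_or_ge (L - ε') 0 with hneg' | hnn
    · linarith
    -- pick a good direction w with ‖w‖ = 1 and D w > L - ε'
    obtain ⟨x, hx1, hx2⟩ := D.exists_lt_apply_of_lt_opNorm hLε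
    have hDx : L - ε' < |D x| := by rwa [Real.norm_eq_abs] at hx2
    have hxne : x ≠ 0 := by
      intro h
      rw [h, map_zero, abs_zero] at hDx
      linarith
    have hxpos : 0 < ‖x‖ := norm_pos_iff.mpr hxne
    set s : ℝ := if 0 ≤ D x then ‖x‖⁻¹ else -‖x‖⁻¹ with hs
    set w := s • x with hw
    have hsabs : |s| = ‖x‖⁻¹ := by
      rw [hs]; split <;> simp [abs_of_nonneg, abs_of_nonpos, inv_nonneg.mpr (norm_nonneg x)]
    have hwnorm : ‖w‖ = 1 := by
      rw [hw, norm_smul, Real.norm_eq_abs, hsabs, inv_mul_cancel₀ (ne_of_gt hxpos)]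
    have hDw : L - ε' < D w := by
      have : D w = ‖x‖⁻¹ * |D x| := by
        rw [hw, map_smul, smul_eq_mul, hs]
        rcases le_or_gt 0 (D x) with h | h
        · rw [if_pos h, abs_of_nonneg h]
        · rw [if_neg (not_le.mpr h), abs_of_neg h]; ring
      rw [this]
      calc L - ε' < |D x| := hDx
        _ = 1 * |D x| := (one_mul _).symm
        _ ≤ ‖x‖⁻¹ * |D x| := by
            apply mul_le_mul_of_nonneg_right _ (abs_nonneg _)
            rw [le_inv_comm₀ one_pos hxpos]
            simpa using hx1.le
    have hwne : w ≠ 0 := by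
      intro h; rw [h, norm_zero] at hwnorm; norm_num at hwnorm
    -- the curve t ↦ x₀ - t • w
    set γ : ℝ → EuclideanSpace ℝ (Fin n) := fun t => x₀ - t • w with hγdef
    have hγcont : Tendsto γ (𝓝 0) (𝓝 x₀) := by
      have h1 : Tendsto (fun t : ℝ => t • w) (𝓝 0) (𝓝 ((0:ℝ) • w)) :=
        (continuous_id.smul continuous_const).tendsto 0
      rw [zero_smul] at h1
      have h2 := (tendsto_const_nhds (x := x₀) (f := 𝓝 (0:ℝ))).sub h1
      rw [sub_zero] at h2
      exact h2
    have hγne : ∀ t : ℝ, 0 < t → γ t ≠ x₀ := by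
      intro t ht h
      rw [hγdef] at h
      simp only [sub_eq_self] at h
      have := smul_eq_zero.mp h
      rcases this with h | h
      · exact absurd h (ne_of_gt ht)
      · exact hwne h
    have hγ : Tendsto γ (𝓝[>] (0:ℝ)) l := by
      rw [hl]
      apply tendsto_nhdsWithin_of_tendsto_nhds_of_eventually_within
      · exact hγcont.mono_left nhdsWithin_le_nhds
      · filter_upwards [eventually_mem_nhdsWithin] with t ht
        exact hγne t ht
    have hlo := (hψ.hasFDerivAt.isLittleO.bound hε')
    have hmax' : ∀ᶠ y in 𝓝 x₀, u y - ψ y ≤ u x₀ - ψ x₀ := hmax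
    have hevt : ∀ᶠ t in 𝓝[>] (0:ℝ), L - 2 * ε' ≤ fneg (γ t) := by
      filter_upwards [(hγcont.mono_left nhdsWithin_le_nhds).eventually hlo,
        (hγcont.mono_left nhdsWithin_le_nhds).eventually hmax',
        eventually_mem_nhdsWithin] with t h1 h2 ht
      have ht : (0:ℝ) < t := ht
      have hsub : γ t - x₀ = -(t • w) := by rw [hγdef]; exact sub_sub_cancel_left x₀ (t • w)
      have hnorm : ‖γ t - x₀‖ = t := by
        rw [hsub, norm_neg, norm_smul, Real.norm_eq_abs, abs_of_pos ht, hwnorm, mul_one]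
      have hDγ : D (γ t - x₀) = -(t * D w) := by
        rw [hsub, map_neg, map_smul, smul_eq_mul]
      have h1' : ψ (γ t) - ψ x₀ - D (γ t - x₀) ≤ ε' * ‖γ t - x₀‖ :=
        (le_abs_self _).trans ((Real.norm_eq_abs _) ▸ h1)
      rw [hDγ, hnorm] at h1'
      -- u x₀ - u (γ t) ≥ t * D w - ε' t ≥ t (L - 2ε')
      have hmul : t * (L - ε') ≤ t * D w := mul_le_mul_of_nonneg_left hDw.le ht.le
      have hring : t * (L - 2 * ε') = t * (L - ε') - ε' * t := by ring
      have hkey : t * (L - 2 * ε') ≤ u x₀ - u (γ t) := by linarith [h1', h2, hmul]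
      have hdist : dist x₀ (γ t) = t := by rw [dist_eq_norm, ← norm_neg, neg_sub, hnorm]
      simp only [hfneg]
      rw [hdist, le_div_iff₀ ht]
      exact le_max_of_le_left (by linarith [hkey])
    have hfreq : ∃ᶠ y in l, L - 2 * ε' ≤ fneg y := hγ.frequently hevt.frequently
    have := Filter.le_limsup_of_frequently_le hfreq hBneg
    rw [hε'def] at this
    linarith
  -- conclude
  have heq : max (limsup fpos l) (limsup fneg l) = limsup fneg l :=
    max_eq_right (hup.trans hdown)
  rw [hsplit, heq]
  rfl
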